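/- arXiv:2109.13981 — 2 statements merged into one kernel-verified Lean document; each statement's English description precedes it below -/
import Mathlib

section
/- Each of the thirteen bivector fields on ℂ³ (coordinates (z, u1, u2)) given by components e₁ = (u1,0,0), e₂ = (u1u2,0,0), e₃ = (0,1,0), e₄ = (0,z,0), e₅ = (0,z²,0), e₆ = (3z²u1, z³, 0), e₇ = (0,0,u1), e₈ = (0,0,z u1), e₉ = (−z u1 u2, 0, z² u1), e₁₀ = (0,u2,0), e₁₁ = (0, z u2, 0), e₁₂ = (3 z u1 u2, z² u2, 0), e₁₃ = (0,0,u1 u2) satisfies the integrability condition J(eᵢ) = 0, where J(q) = q¹ q²_{,z} − q² q¹_{,z} + q² q⁰_{,u1} − q⁰ q²_{,u1} + q⁰ q¹_{,u2} − q¹ q⁰_{,u2}. -/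
noncomputable section

/-- `ℂ³` with coordinates `(z, u1, u2) = (x⁰, x¹, x²)`. -/
abbrev C3 : Type := ℂ × ℂ × ℂ

/-- Partial derivative in the first coordinate. -/
def pd0 (f : C3 → ℂ) (p : C3) : ℂ := deriv (fun t => f (t, p.2.1, p.2.2)) p.1

/-- Partial derivative in the second coordinate. -/
def pd1 (f : C3 → ℂ) (p : C3) : ℂ := deriv (fun t => f (p.1, t, p.2.2)) p.2.1

/-- Partial derivative in the third coordinate. -/
def pd2 (f : C3 → ℂ) (p : C3) : ℂ := deriv (fun t => f (p.1, p.2.1, t)) p.2.2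

/-- The coefficient of the Schouten self-bracket of the bivector field
`q = q0 ∂₁∧∂₂ + q1 ∂₂∧∂₀ + q2 ∂₀∧∂₁`: integrability (the Poisson condition)
is `J q0 q1 q2 = 0`. -/
def J (q0 q1 q2 : C3 → ℂ) (p : C3) : ℂ :=
  q1 p * pd0 q2 p - q2 p * pd0 q1 p + q2 p * pd1 q0 p - q0 p * pd1 q2 p +
    q0 p * pd2 q1 p - q1 p * pd2 q0 p

/-! A bivector field with a single nonzero component is always Poisson. When only `q2` (resp. `q1`)
vanishes, `J` reduces to the Wronskian of the two other components along the `x²`- (resp. `x¹`-)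
coordinate line, and for `e₆`, `e₉`, `e₁₂` these components are constant multiples of one function
on each such line (for `e₁₂`: `3zu₁ · u₂` and `z² · u₂`), so the Wronskian vanishes. -/

theorem wronskian_const_mul_eq_zero {𝕜 : Type*} [NontriviallyNormedField 𝕜] (a b : 𝕜)
    (g : 𝕜 → 𝕜) (t : 𝕜) :
    a * g t * deriv (fun s => b * g s) t - b * g t * deriv (fun s => a * g s) t = 0 := by
  simp only [deriv_const_mul_field']
  ring

@[simp]
theorem pd0_const (c : ℂ) (p : C3) : pd0 (fun _ => c) p = 0 := deriv_const _ c

@[simp]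
theorem pd1_const (c : ℂ) (p : C3) : pd1 (fun _ => c) p = 0 := deriv_const _ c

@[simp]
theorem pd2_const (c : ℂ) (p : C3) : pd2 (fun _ => c) p = 0 := deriv_const _ c

theorem J_eq_zero_of_q0_only (q0 : C3 → ℂ) (p : C3) :
    J q0 (fun _ => 0) (fun _ => 0) p = 0 := by
  simp [J]

theorem J_eq_zero_of_q1_only (q1 : C3 → ℂ) (p : C3) :
    J (fun _ => 0) q1 (fun _ => 0) p = 0 := by
  simp [J]

theorem J_eq_zero_of_q2_only (q2 : C3 → ℂ) (p : C3) :
    J (fun _ => 0) (fun _ => 0) q2 p = 0 := by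
  simp [J]

theorem J_eq_zero_of_q1_zero_of_proportional_on_line (q0 q2 : C3 → ℂ) (p : C3) (a b : ℂ)
    (g : ℂ → ℂ) (h0 : ∀ t, q0 (p.1, t, p.2.2) = a * g t) (h2 : ∀ t, q2 (p.1, t, p.2.2) = b * g t) :
    J q0 (fun _ => 0) q2 p = 0 := by
  simp only [J, pd1, pd0_const, pd2_const, h0, h2, mul_zero, zero_mul, sub_zero, zero_add,
    add_zero]
  exact wronskian_const_mul_eq_zero b a g p.2.1

theorem J_eq_zero_of_q2_zero_of_proportional_on_line (q0 q1 : C3 → ℂ) (p : C3) (a b : ℂ)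
    (g : ℂ → ℂ) (h0 : ∀ t, q0 (p.1, p.2.1, t) = a * g t) (h1 : ∀ t, q1 (p.1, p.2.1, t) = b * g t) :
    J q0 q1 (fun _ => 0) p = 0 := by
  simp only [J, pd2, pd0_const, pd1_const, h0, h1, mul_zero, zero_mul, sub_zero, zero_add,
    add_zero]
  exact wronskian_const_mul_eq_zero a b g p.2.2

/-- All thirteen generators of bivector fields on `W₃` (in the `U` chart)
satisfy the integrability condition `J = 0`. -/
theorem W3_generators_integrable :
    (∀ p : C3, J (fun x => x.2.1) (fun _ => 0) (fun _ => 0) p = 0) ∧ -- e₁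
    (∀ p : C3, J (fun x => x.2.1 * x.2.2) (fun _ => 0) (fun _ => 0) p = 0) ∧ -- e₂
    (∀ p : C3, J (fun _ => 0) (fun _ => 1) (fun _ => 0) p = 0) ∧ -- e₃
    (∀ p : C3, J (fun _ => 0) (fun x => x.1) (fun _ => 0) p = 0) ∧ -- e₄
    (∀ p : C3, J (fun _ => 0) (fun x => x.1 ^ 2) (fun _ => 0) p = 0) ∧ -- e₅
    (∀ p : C3, J (fun x => 3 * x.1 ^ 2 * x.2.1) (fun x => x.1 ^ 3) (fun _ => 0) p = 0) ∧ -- e₆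
    (∀ p : C3, J (fun _ => 0) (fun _ => 0) (fun x => x.2.1) p = 0) ∧ -- e₇
    (∀ p : C3, J (fun _ => 0) (fun _ => 0) (fun x => x.1 * x.2.1) p = 0) ∧ -- e₈
    (∀ p : C3, J (fun x => -(x.1 * x.2.1 * x.2.2)) (fun _ => 0) (fun x => x.1 ^ 2 * x.2.1) p = 0) ∧ -- e₉
    (∀ p : C3, J (fun _ => 0) (fun x => x.2.2) (fun _ => 0) p = 0) ∧ -- e₁₀
    (∀ p : C3, J (fun _ => 0) (fun x => x.1 * x.2.2) (fun _ => 0) p = 0) ∧ -- e₁₁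
    (∀ p : C3, J (fun x => 3 * x.1 * x.2.1 * x.2.2) (fun x => x.1 ^ 2 * x.2.2) (fun _ => 0) p = 0) ∧ -- e₁₂
    (∀ p : C3, J (fun _ => 0) (fun _ => 0) (fun x => x.2.1 * x.2.2) p = 0) := by -- e₁₃
  refine ⟨J_eq_zero_of_q0_only _, J_eq_zero_of_q0_only _, J_eq_zero_of_q1_only _,
    J_eq_zero_of_q1_only _, J_eq_zero_of_q1_only _, fun p => ?e₆, J_eq_zero_of_q2_only _,
    J_eq_zero_of_q2_only _, fun p => ?e₉, J_eq_zero_of_q1_only _, J_eq_zero_of_q1_only _,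
    fun p => ?e₁₂, J_eq_zero_of_q2_only _⟩
  case e₆ =>
    exact J_eq_zero_of_q2_zero_of_proportional_on_line _ _ p (3 * p.1 ^ 2 * p.2.1) (p.1 ^ 3)
      (fun _ => 1) (fun _ => (mul_one _).symm) (fun _ => (mul_one _).symm)
  case e₉ =>
    exact J_eq_zero_of_q1_zero_of_proportional_on_line _ _ p (-(p.1 * p.2.2)) (p.1 ^ 2) id
      (fun t => by dsimp only [id]; ring) (fun _ => rfl)
  case e₁₂ =>
    exact J_eq_zero_of_q2_zero_of_proportional_on_line _ _ p (3 * p.1 * p.2.1) (p.1 ^ 2) id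
      (fun _ => rfl) (fun _ => rfl)
end
end

section
/- Applying the Λ²-tangent transition matrix of W₃, with rows (z², −3zu1, zu2), (0, −z⁻³, 0), (0, 0, −z), to e₁ = (u1, 0, 0) yields (z²u1, 0, 0), which in coordinates (ξ, v1, v2) = (z⁻¹, z³u1, z⁻¹u2) equals (ξ v1, 0, 0). Consequently, the degeneracy locus of e₁ on W₃ is {u1 = 0} in the U chart and {ξ = 0} ∪ {v1 = 0} in the V chart, having three irreducible components in total; whereas the degeneracy locus of e₂ = (u1u2,0,0)_U = (v1 v2, 0, 0)_V has four irreducible components ({u1=0}, {u2=0}, {v1=0}, {v2=0}). Hence (W₃, e₁) and (W₃, e₂) are not isomorphic Poisson manifolds. -/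
noncomputable section

/-- The gluing relation of `W₃ = Tot(O(−3) ⊕ O(1))`: `(z,u1,u2)` in the `U`
chart is identified with `(z⁻¹, z³u1, z⁻¹u2)` in the `V` chart for `z ≠ 0`. -/
def relW3 : C3 ⊕ C3 → C3 ⊕ C3 → Prop := fun a b =>
  ∃ z u1 u2 : ℂ, z ≠ 0 ∧ a = Sum.inl (z, u1, u2) ∧
    b = Sum.inr (z⁻¹, z ^ 3 * u1, z⁻¹ * u2)

/-- The threefold `W₃` as a topological space, glued from two copies of `ℂ³`. -/
def W3 : Type := Quot (fun a b => relW3 a b ∨ relW3 b a)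

instance : TopologicalSpace W3 := by unfold W3; infer_instance

def mkW3 : C3 ⊕ C3 → W3 := Quot.mk _

/-- Degeneracy locus of `e₁ = (u1,0,0)_U = (ξv1,0,0)_V`:
`{u1 = 0}` in the `U` chart, `{ξ = 0} ∪ {v1 = 0}` in the `V` chart. -/
def De1 : Set W3 :=
  mkW3 '' (Sum.inl '' {p : C3 | p.2.1 = 0} ∪
    Sum.inr '' {p : C3 | p.1 = 0 ∨ p.2.1 = 0})

/-- Degeneracy locus of `e₂ = (u1u2,0,0)_U = (v1v2,0,0)_V`. -/
def De2 : Set W3 :=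
  mkW3 '' (Sum.inl '' {p : C3 | p.2.1 = 0 ∨ p.2.2 = 0} ∪
    Sum.inr '' {p : C3 | p.2.1 = 0 ∨ p.2.2 = 0})

/-!
A homeomorphism of `W₃` carrying `D(e₁)` onto `D(e₂)` preserves the number of ends of these
loci. The fibrewise norm `fiberNormSq` is a proper exhaustion of `W₃` vanishing exactly on the
zero section `P¹`. `D(e₁)` is the total space of `O(1)` together with the fibre `{ξ = 0} ≅ ℂ²`;
outside a sublevel set `{fiberNormSq ≤ R}` it stays path-connected, since every point can be
moved, with `fiberNormSq` increasing, into the fibre `ξ = 0`, where what is left is the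
complement of a ball in `ℂ²`. So `D(e₁)` has one end. `D(e₂)` consists of the total spaces of `O(−3)` and `O(1)`
glued along the zero section; off the zero section it falls apart into the two sheets
`{u1 = 0}` and `{u2 = 0}`, both unbounded, so `D(e₂)` has at least two ends.
-/

open Set Filter Metric

/-- `S` has at most one end. -/
def IsPreconnectedAtInfinity {X : Type*} [TopologicalSpace X] (S : Set X) : Prop :=
  ∀ K, IsCompact K → ∃ K', IsCompact K' ∧ K ⊆ K' ∧ IsPreconnected (S \ K')

section PreconnectedAtInfinity

variable {X Y : Type*} [TopologicalSpace X] [TopologicalSpace Y]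

theorem Homeomorph.isPreconnectedAtInfinity_image (φ : X ≃ₜ Y) {S : Set X}
    (hS : IsPreconnectedAtInfinity S) : IsPreconnectedAtInfinity (φ '' S) := by
  intro K hK
  obtain ⟨K', hK', hKK', hpre⟩ := hS (φ ⁻¹' K) (φ.isCompact_preimage.2 hK)
  refine ⟨φ '' K', hK'.image φ.continuous, ?_, ?_⟩
  · exact fun y hy => ⟨φ.symm y, hKK' (by simpa using hy), φ.apply_symm_apply y⟩
  · rw [← image_sdiff φ.injective]
    exact hpre.image φ φ.continuous.continuousOn

theorem isPreconnectedAtInfinity_of_exhaustion {f : X → ℝ} (hf : Continuous f)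
    (hcpt : ∀ R, IsCompact {x | f x ≤ R}) {S : Set X}
    (hS : ∀ᶠ R in atTop, IsPreconnected {x ∈ S | R < f x}) : IsPreconnectedAtInfinity S := by
  intro K hK
  obtain ⟨R₀, hR₀⟩ := (hK.image hf).bddAbove
  obtain ⟨R, hR, hR₀R⟩ := (hS.and (eventually_ge_atTop R₀)).exists
  refine ⟨{x | f x ≤ R}, hcpt R, fun x hx => (hR₀ ⟨x, hx, rfl⟩).trans hR₀R, ?_⟩
  convert hR using 1
  ext x
  simp [not_le]

theorem not_isPreconnectedAtInfinity {f : X → ℝ} (hf : Continuous f) {S K U V : Set X}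
    (hK : IsCompact K) (hU : IsOpen U) (hV : IsOpen V) (hSUV : S \ K ⊆ U ∪ V)
    (hdisj : S ∩ (U ∩ V) = ∅) (hSU : ¬BddAbove (f '' (S ∩ U)))
    (hSV : ¬BddAbove (f '' (S ∩ V))) : ¬IsPreconnectedAtInfinity S := by
  intro hS
  obtain ⟨K', hK', hKK', hpre⟩ := hS K hK
  have escapes : ∀ W, ¬BddAbove (f '' (S ∩ W)) → ((S \ K') ∩ W).Nonempty := by
    intro W hW
    by_contra h
    refine hW ((hK'.image hf).bddAbove.mono (image_mono fun x hx => ?_))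
    by_contra hxK'
    exact h ⟨x, ⟨hx.1, hxK'⟩, hx.2⟩
  obtain ⟨x, hx, hxUV⟩ :=
    hpre U V hU hV ((sdiff_subset_sdiff_right hKK').trans hSUV) (escapes U hSU) (escapes V hSV)
  exact (eq_empty_iff_forall_notMem.1 hdisj) x ⟨hx.1, hxUV⟩

end PreconnectedAtInfinity

theorem isPathConnected_compl_closedBall {E : Type*} [NormedAddCommGroup E] [NormedSpace ℝ E]
    (h : 1 < Module.rank ℝ E) (r : ℝ) : IsPathConnected (closedBall (0 : E) r)ᶜ := by
  have : Nontrivial E := rank_pos_iff_nontrivial.1 (zero_lt_one.trans h)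
  obtain ⟨u, hu⟩ := exists_norm_eq E zero_le_one
  have mem_iff : ∀ x : E, x ∈ (closedBall (0 : E) r)ᶜ ↔ r < ‖x‖ := by simp
  have ray : ∀ {a b : ℝ}, r < a → r < b → JoinedIn (closedBall (0 : E) r)ᶜ (a • u) (b • u) := by
    intro a b ha hb
    refine ((JoinedIn.of_segment_subset ((convex_Ioi r).segment_subset ha hb)).map
      (f := fun t : ℝ => t • u) (by fun_prop)).mono ?_
    rintro _ ⟨t, ht, rfl⟩
    rw [mem_iff, norm_smul, hu, mul_one, Real.norm_eq_abs]
    exact ht.trans_le (le_abs_self t)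
  refine ⟨(max r 0 + 1) • u, ?_, fun {y} hy => ?_⟩
  · rw [mem_iff, norm_smul, hu, mul_one, Real.norm_eq_abs, abs_of_pos (by positivity)]
    linarith [le_max_left r 0]
  · rw [mem_iff] at hy
    have hsphere : sphere (0 : E) ‖y‖ ⊆ (closedBall (0 : E) r)ᶜ := fun x hx => by
      rw [mem_iff, mem_sphere_zero_iff_norm.1 hx]; exact hy
    refine (ray (by linarith [le_max_left r 0]) hy).trans ?_
    refine ((isPathConnected_sphere h 0 (norm_nonneg y)).joinedIn _ ?_ _ ?_).mono hsphere
    · simp [norm_smul, hu]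
    · simp

theorem mkW3_surjective : Function.Surjective mkW3 := Quot.exists_rep

theorem continuous_mkW3 : Continuous mkW3 := continuous_quot_mk

theorem mkW3_inl_eq_mkW3_inr {z : ℂ} (hz : z ≠ 0) (u1 u2 : ℂ) :
    mkW3 (.inl (z, u1, u2)) = mkW3 (.inr (z⁻¹, z ^ 3 * u1, z⁻¹ * u2)) :=
  Quot.sound (.inl ⟨z, u1, u2, hz, rfl, rfl⟩)

theorem mkW3_inr_eq_mkW3_inl {ξ : ℂ} (hξ : ξ ≠ 0) (v1 v2 : ℂ) :
    mkW3 (.inr (ξ, v1, v2)) = mkW3 (.inl (ξ⁻¹, ξ ^ 3 * v1, ξ⁻¹ * v2)) := by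
  rw [mkW3_inl_eq_mkW3_inr (inv_ne_zero hξ)]
  congr 3 <;> field_simp

theorem exists_mkW3_eq_with_norm_fst_le_one (x : W3) :
    ∃ p : C3, ‖p.1‖ ≤ 1 ∧ (x = mkW3 (.inl p) ∨ x = mkW3 (.inr p)) := by
  obtain ⟨⟨z, u1, u2⟩ | ⟨z, u1, u2⟩, rfl⟩ := mkW3_surjective x
  all_goals
    by_cases hz : ‖z‖ ≤ 1
    · exact ⟨(z, u1, u2), hz, by simp⟩
    have hz0 : z ≠ 0 := by rintro rfl; simp at hz
    have hinv : ‖z⁻¹‖ ≤ 1 := by rw [norm_inv]; exact inv_le_one_of_one_le₀ (by linarith)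
  · exact ⟨_, hinv, .inr (mkW3_inl_eq_mkW3_inr hz0 u1 u2)⟩
  · exact ⟨_, hinv, .inl (mkW3_inr_eq_mkW3_inl hz0 u1 u2)⟩

theorem exists_mkW3_inr_or_inl_zero (x : W3) :
    (∃ q, x = mkW3 (.inr q)) ∨ ∃ u1 u2, x = mkW3 (.inl (0, u1, u2)) := by
  obtain ⟨⟨z, u1, u2⟩ | q, rfl⟩ := mkW3_surjective x
  · rcases eq_or_ne z 0 with rfl | hz
    · exact .inr ⟨u1, u2, rfl⟩
    · exact .inl ⟨_, mkW3_inl_eq_mkW3_inr hz u1 u2⟩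
  · exact .inl ⟨q, rfl⟩

def liftW3 {β : Sort*} (f g : C3 → β)
    (h : ∀ z u1 u2 : ℂ, z ≠ 0 → f (z, u1, u2) = g (z⁻¹, z ^ 3 * u1, z⁻¹ * u2)) : W3 → β :=
  Quot.lift (Sum.elim f g) <| by
    rintro _ _ (⟨z, u1, u2, hz, rfl, rfl⟩ | ⟨z, u1, u2, hz, rfl, rfl⟩)
    exacts [h z u1 u2 hz, (h z u1 u2 hz).symm]

section liftW3

variable {β : Sort*} {f g : C3 → β}
  {h : ∀ z u1 u2 : ℂ, z ≠ 0 → f (z, u1, u2) = g (z⁻¹, z ^ 3 * u1, z⁻¹ * u2)}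

@[simp] theorem liftW3_mkW3_inl (p : C3) : liftW3 f g h (mkW3 (.inl p)) = f p := rfl

@[simp] theorem liftW3_mkW3_inr (p : C3) : liftW3 f g h (mkW3 (.inr p)) = g p := rfl

end liftW3

theorem continuous_liftW3 {β : Type*} [TopologicalSpace β] {f g : C3 → β}
    {h : ∀ z u1 u2 : ℂ, z ≠ 0 → f (z, u1, u2) = g (z⁻¹, z ^ 3 * u1, z⁻¹ * u2)}
    (hf : Continuous f) (hg : Continuous g) : Continuous (liftW3 f g h) :=
  continuous_quot_lift _ (hf.sumElim hg)

def chartSet (s t : Set C3)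
    (h : ∀ z u1 u2 : ℂ, z ≠ 0 → ((z, u1, u2) ∈ s ↔ (z⁻¹, z ^ 3 * u1, z⁻¹ * u2) ∈ t)) :
    Set W3 :=
  {x | liftW3 (· ∈ s) (· ∈ t) (fun z u1 u2 hz => propext (h z u1 u2 hz)) x}

section chartSet

variable {s t : Set C3}
  {h : ∀ z u1 u2 : ℂ, z ≠ 0 → ((z, u1, u2) ∈ s ↔ (z⁻¹, z ^ 3 * u1, z⁻¹ * u2) ∈ t)}

@[simp] theorem mkW3_inl_mem_chartSet (p : C3) : mkW3 (.inl p) ∈ chartSet s t h ↔ p ∈ s :=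
  Iff.rfl

@[simp] theorem mkW3_inr_mem_chartSet (p : C3) : mkW3 (.inr p) ∈ chartSet s t h ↔ p ∈ t :=
  Iff.rfl

theorem image_mkW3_eq_chartSet : mkW3 '' (Sum.inl '' s ∪ Sum.inr '' t) = chartSet s t h := by
  ext x
  obtain ⟨a, rfl⟩ := mkW3_surjective x
  constructor
  · rintro ⟨_, ⟨p, hp, rfl⟩ | ⟨p, hp, rfl⟩, hx⟩ <;> rw [← hx] <;> exact hp
  · rcases a with p | p <;> intro hp
    exacts [⟨_, .inl ⟨p, hp, rfl⟩, rfl⟩, ⟨_, .inr ⟨p, hp, rfl⟩, rfl⟩]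

theorem isOpen_chartSet (hs : IsOpen s) (ht : IsOpen t) : IsOpen (chartSet s t h) :=
  isQuotientMap_quot_mk.isOpen_preimage.1 (isOpen_sum_iff.2 ⟨hs, ht⟩)

end chartSet

theorem De1_eq_chartSet :
    De1 = chartSet {p | p.2.1 = 0} {p | p.1 = 0 ∨ p.2.1 = 0} (fun _ _ _ hz => by simp [hz]) :=
  image_mkW3_eq_chartSet

theorem De2_eq_chartSet :
    De2 = chartSet {p | p.2.1 = 0 ∨ p.2.2 = 0} {p | p.2.1 = 0 ∨ p.2.2 = 0}
      (fun _ _ _ hz => by simp [hz]) :=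
  image_mkW3_eq_chartSet

/-- Fibrewise squared norm for the hermitian metrics `(1 + |z|²)³|u1|²` on `O(−3)` and
`|u2|² / (1 + |z|²)` on `O(1)`; taking the max of the two makes it the squared sup norm of
`(v1, v2)` on the fibre `ξ = 0`. -/
def fiberNormSqChart (p : C3) : ℝ :=
  max (‖p.2.1‖ ^ 2 * (1 + ‖p.1‖ ^ 2) ^ 3) (‖p.2.2‖ ^ 2 / (1 + ‖p.1‖ ^ 2))

theorem fiberNormSqChart_glue {z : ℂ} (hz : z ≠ 0) (u1 u2 : ℂ) :
    fiberNormSqChart (z, u1, u2) = fiberNormSqChart (z⁻¹, z ^ 3 * u1, z⁻¹ * u2) := by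
  have hs : 0 < ‖z‖ ^ 2 := by positivity
  simp only [fiberNormSqChart, norm_mul, norm_pow, norm_inv, mul_pow, inv_pow]
  congr 1 <;> field_simp <;> ring

def fiberNormSq : W3 → ℝ :=
  liftW3 fiberNormSqChart fiberNormSqChart fun _ _ _ hz => fiberNormSqChart_glue hz _ _

theorem continuous_fiberNormSq : Continuous fiberNormSq :=
  have : Continuous fiberNormSqChart :=
    .max (by fun_prop) (.div (by fun_prop) (by fun_prop) fun _ => by positivity)
  continuous_liftW3 this this

theorem fiberNormSqChart_zero_fst (v : ℂ × ℂ) : fiberNormSqChart (0, v) = ‖v‖ ^ 2 := by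
  rcases le_total ‖v.1‖ ‖v.2‖ with h | h <;>
    simp [fiberNormSqChart, Prod.norm_def, h, pow_le_pow_left₀ (norm_nonneg _) h]

theorem fiberNormSqChart_zero_snd (z u2 : ℂ) :
    fiberNormSqChart (z, 0, u2) = ‖u2‖ ^ 2 / (1 + ‖z‖ ^ 2) := by
  simp only [fiberNormSqChart, norm_zero, zero_pow two_ne_zero, zero_mul]
  exact max_eq_right (by positivity)

theorem norm_le_of_fiberNormSqChart_le {p : C3} {R : ℝ} (hz : ‖p.1‖ ≤ 1)
    (hR : fiberNormSqChart p ≤ R) : ‖p‖ ≤ 1 + 2 * R := by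
  obtain ⟨z, u1, u2⟩ := p
  obtain ⟨h1, h2⟩ := max_le_iff.1 hR
  have hz2 : 1 + ‖z‖ ^ 2 ≤ 2 := by nlinarith [norm_nonneg z]
  have hu1 : ‖u1‖ ^ 2 ≤ R :=
    (le_mul_of_one_le_right (sq_nonneg _)
      (one_le_pow₀ (le_add_of_nonneg_right (sq_nonneg _)))).trans h1
  have hu2 : ‖u2‖ ^ 2 ≤ 2 * R := by
    rw [div_le_iff₀ (by positivity)] at h2
    nlinarith [sq_nonneg ‖u1‖]
  simp only [norm_prod_le_iff]
  refine ⟨?_, ?_, ?_⟩ <;> nlinarith [sq_nonneg (‖u1‖ - 1), sq_nonneg (‖u2‖ - 1), sq_nonneg ‖u1‖]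

theorem isCompact_fiberNormSq_le (R : ℝ) : IsCompact {x | fiberNormSq x ≤ R} := by
  have hB := isCompact_closedBall (0 : C3) (1 + 2 * R)
  refine (((hB.image continuous_inl).union (hB.image continuous_inr)).image continuous_mkW3)
    |>.of_isClosed_subset (isClosed_le continuous_fiberNormSq continuous_const) fun x hx => ?_
  obtain ⟨p, hp, rfl | rfl⟩ := exists_mkW3_eq_with_norm_fst_le_one x
  all_goals
    have hpB : p ∈ closedBall (0 : C3) (1 + 2 * R) :=
      mem_closedBall_zero_iff.2 (norm_le_of_fiberNormSqChart_le hp hx)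
  exacts [⟨_, .inl ⟨p, hpB, rfl⟩, rfl⟩, ⟨_, .inr ⟨p, hpB, rfl⟩, rfl⟩]

@[simp] theorem fiberNormSq_mkW3_inl (p : C3) : fiberNormSq (mkW3 (.inl p)) = fiberNormSqChart p :=
  rfl

@[simp] theorem fiberNormSq_mkW3_inr (p : C3) : fiberNormSq (mkW3 (.inr p)) = fiberNormSqChart p :=
  rfl

@[simp] theorem mkW3_inl_mem_De1 (p : C3) : mkW3 (.inl p) ∈ De1 ↔ p.2.1 = 0 := by
  rw [De1_eq_chartSet]; rfl

@[simp] theorem mkW3_inr_mem_De1 (p : C3) : mkW3 (.inr p) ∈ De1 ↔ p.1 = 0 ∨ p.2.1 = 0 := by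
  rw [De1_eq_chartSet]; rfl

section De1

variable {R : ℝ}

theorem joinedIn_De1_toward_fiber {ξ u2 : ℂ} (h : R < ‖u2‖ ^ 2 / (1 + ‖ξ‖ ^ 2)) :
    JoinedIn {x ∈ De1 | R < fiberNormSq x} (mkW3 (.inr (0, 0, u2))) (mkW3 (.inr (ξ, 0, u2))) := by
  refine .ofLine (f := fun t : ℝ => mkW3 (.inr ((t : ℂ) * ξ, 0, u2)))
    (continuous_mkW3.comp (by fun_prop)).continuousOn (by simp) (by simp) ?_
  rintro _ ⟨t, ⟨ht0, ht1⟩, rfl⟩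
  refine ⟨by simp, h.trans_le ?_⟩
  rw [fiberNormSq_mkW3_inr, fiberNormSqChart_zero_snd, norm_mul, Complex.norm_real,
    Real.norm_eq_abs, abs_of_nonneg ht0]
  gcongr
  exact mul_le_of_le_one_left (norm_nonneg ξ) ht1

theorem joinedIn_De1_across_charts {u2 : ℂ} (h : R < ‖u2‖ ^ 2) :
    JoinedIn {x ∈ De1 | R < fiberNormSq x} (mkW3 (.inr (1, 0, 2 * u2)))
      (mkW3 (.inl (0, 0, u2))) := by
  refine .symm <| .ofLine (f := fun t : ℝ => mkW3 (.inl ((t : ℂ), 0, (1 + t) * u2)))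
    (continuous_mkW3.comp (by fun_prop)).continuousOn (by simp) ?_ ?_
  · norm_num [mkW3_inl_eq_mkW3_inr one_ne_zero]
  rintro _ ⟨t, ⟨ht0, -⟩, rfl⟩
  refine ⟨by simp, h.trans_le ?_⟩
  rw [fiberNormSq_mkW3_inl, fiberNormSqChart_zero_snd, le_div_iff₀ (by positivity), norm_mul]
  have : ‖(1 : ℂ) + t‖ = 1 + t := by norm_cast; rw [Real.norm_of_nonneg (by linarith)]
  rw [this, Complex.norm_real, Real.norm_eq_abs, sq_abs]
  nlinarith [sq_nonneg ‖u2‖]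

theorem isPathConnected_De1_inter (hR : 0 ≤ R) :
    IsPathConnected {x ∈ De1 | R < fiberNormSq x} := by
  set D := {x ∈ De1 | R < fiberNormSq x}
  have mem_D_iff : ∀ w : ℂ × ℂ, mkW3 (.inr (0, w)) ∈ D ↔ w ∈ (closedBall 0 √R)ᶜ := fun w => by
    simp [D, fiberNormSqChart_zero_fst, Real.sqrt_lt hR (norm_nonneg _)]
  have hrank : 1 < Module.rank ℝ (ℂ × ℂ) := by
    rw [rank_prod', Complex.rank_real_complex]; norm_num
  obtain ⟨x₀, hx₀, hF⟩ := (isPathConnected_compl_closedBall hrank √R).image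
    (f := fun w => mkW3 (.inr (0, w))) (continuous_mkW3.comp (by fun_prop))
  have hFD : (fun w => mkW3 (.inr (0, w))) '' (closedBall 0 √R)ᶜ ⊆ D :=
    image_subset_iff.2 fun w hw => (mem_D_iff w).2 hw
  have joined_fiber : ∀ w, mkW3 (.inr (0, w)) ∈ D → JoinedIn D x₀ (mkW3 (.inr (0, w))) :=
    fun w hw => (hF ⟨w, (mem_D_iff w).1 hw, rfl⟩).mono hFD
  have joined_V : ∀ ξ u2 : ℂ, R < ‖u2‖ ^ 2 / (1 + ‖ξ‖ ^ 2) →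
      JoinedIn D x₀ (mkW3 (.inr (ξ, 0, u2))) := by
    intro ξ u2 h
    refine (joined_fiber (0, u2) ⟨by simp, h.trans_le ?_⟩).trans (joinedIn_De1_toward_fiber h)
    simpa [fiberNormSqChart_zero_fst, Prod.norm_def] using
      div_le_self (sq_nonneg _) (le_add_of_nonneg_right (sq_nonneg _))
  refine ⟨x₀, hFD hx₀, fun {y} hy => ?_⟩
  obtain ⟨hy, hRy⟩ := hy
  rcases exists_mkW3_inr_or_inl_zero y with ⟨⟨ξ, v1, v2⟩, rfl⟩ | ⟨u1, u2, rfl⟩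
  · rcases (mkW3_inr_mem_De1 _).1 hy with rfl | rfl
    · exact joined_fiber (v1, v2) ⟨hy, hRy⟩
    · exact joined_V ξ v2 (by simpa [fiberNormSqChart_zero_snd] using hRy)
  · obtain rfl : u1 = 0 := (mkW3_inl_mem_De1 _).1 hy
    have hu2 : R < ‖u2‖ ^ 2 := by simpa [fiberNormSqChart_zero_snd] using hRy
    refine (joined_V 1 (2 * u2) ?_).trans (joinedIn_De1_across_charts hu2)
    norm_num [norm_mul]
    nlinarith [sq_nonneg ‖u2‖]

end De1

theorem isPreconnectedAtInfinity_De1 : IsPreconnectedAtInfinity De1 :=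
  isPreconnectedAtInfinity_of_exhaustion continuous_fiberNormSq isCompact_fiberNormSq_le <|
    eventually_atTop.2 ⟨0, fun _ hR => (isPathConnected_De1_inter hR).isConnected.isPreconnected⟩

@[simp] theorem mkW3_inl_mem_De2 (p : C3) : mkW3 (.inl p) ∈ De2 ↔ p.2.1 = 0 ∨ p.2.2 = 0 := by
  rw [De2_eq_chartSet]; rfl

@[simp] theorem mkW3_inr_mem_De2 (p : C3) : mkW3 (.inr p) ∈ De2 ↔ p.2.1 = 0 ∨ p.2.2 = 0 := by
  rw [De2_eq_chartSet]; rfl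

theorem not_isPreconnectedAtInfinity_De2 : ¬IsPreconnectedAtInfinity De2 := by
  set U := chartSet {p | p.2.2 ≠ 0} {p | p.2.2 ≠ 0} (fun _ _ _ hz => by simp [hz])
  set V := chartSet {p | p.2.1 ≠ 0} {p | p.2.1 ≠ 0} (fun _ _ _ hz => by simp [hz])
  have hU : IsOpen U := by
    have : IsOpen {p : C3 | p.2.2 ≠ 0} := isOpen_ne_fun (by fun_prop) continuous_const
    exact isOpen_chartSet this this
  have hV : IsOpen V := by
    have : IsOpen {p : C3 | p.2.1 ≠ 0} := isOpen_ne_fun (by fun_prop) continuous_const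
    exact isOpen_chartSet this this
  have unbounded : ∀ T : Set W3, (∀ c : ℂ, c ≠ 0 → ∃ x ∈ T, fiberNormSq x = ‖c‖ ^ 2) →
      ¬BddAbove (fiberNormSq '' T) := by
    refine fun T hT => not_bddAbove_iff.2 fun M => ?_
    obtain ⟨x, hx, hxc⟩ := hT ((|M| + 1 : ℝ) : ℂ) (by norm_cast; positivity)
    refine ⟨_, ⟨x, hx, rfl⟩, ?_⟩
    rw [hxc, Complex.norm_real, Real.norm_of_nonneg (by positivity)]
    nlinarith [le_abs_self M, abs_nonneg M]
  refine not_isPreconnectedAtInfinity continuous_fiberNormSq (isCompact_fiberNormSq_le 0)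
    hU hV ?_ ?_
    (unbounded (De2 ∩ U) fun c hc => ⟨mkW3 (.inl (0, 0, c)), ⟨by simp, hc⟩, by
      simp [fiberNormSqChart_zero_fst, Prod.norm_def]⟩)
    (unbounded (De2 ∩ V) fun c hc => ⟨mkW3 (.inl (0, c, 0)), ⟨by simp, hc⟩, by
      simp [fiberNormSqChart_zero_fst, Prod.norm_def]⟩)
  · rintro x ⟨hx, hx0⟩
    obtain ⟨p | p, rfl⟩ := mkW3_surjective x
    all_goals
      refine by_contra fun hUV => hx0 ?_
      obtain ⟨z, u1, u2⟩ := p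
      simp_all [U, V, fiberNormSqChart]
  · refine eq_empty_iff_forall_notMem.2 fun x ⟨hx, hU, hV⟩ => ?_
    obtain ⟨p | p, rfl⟩ := mkW3_surjective x
    all_goals simp_all [U, V]

/-- Applying the `Λ²T`-transition matrix of `W₃` to `e₁ = (u1,0,0)` gives
`(z²u1, 0, 0) = (ξv1, 0, 0)`; the degeneracy locus of `e₁` is `{u1 = 0}` in
the `U` chart and `{ξ = 0} ∪ {v1 = 0}` in the `V` chart (three irreducible
components in total), while that of `e₂` has the four components
`{u1=0}, {u2=0}` and `{v1=0}, {v2=0}`; hence `(W₃,e₁)` and `(W₃,e₂)` are not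
isomorphic Poisson manifolds: no automorphism of `W₃` carries `D(e₁)` onto
`D(e₂)`. -/
theorem W3_e1_e2_not_isomorphic :
    (∀ z u1 u2 : ℂ, z ≠ 0 →
      Matrix.mulVec !![z ^ 2, -(3 * z * u1), z * u2;
                       0, -(z ^ 3)⁻¹, 0;
                       0, 0, -z] ![u1, 0, 0] = ![z ^ 2 * u1, 0, 0] ∧
      z ^ 2 * u1 = z⁻¹ * (z ^ 3 * u1)) ∧
    ({p : C3 | ((p.2.1, (0 : ℂ), (0 : ℂ)) : C3) = 0} = {p : C3 | p.2.1 = 0}) ∧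
    ({p : C3 | ((p.1 * p.2.1, (0 : ℂ), (0 : ℂ)) : C3) = 0} =
      {p : C3 | p.1 = 0} ∪ {p : C3 | p.2.1 = 0}) ∧
    ({p : C3 | ((p.2.1 * p.2.2, (0 : ℂ), (0 : ℂ)) : C3) = 0} =
      {p : C3 | p.2.1 = 0} ∪ {p : C3 | p.2.2 = 0}) ∧
    (¬ ∃ φ : W3 ≃ₜ W3, φ '' De1 = De2) := by
  refine ⟨fun z u1 u2 hz => ⟨?_, by field_simp⟩, ?_, ?_, ?_, ?_⟩
  · ext i
    fin_cases i <;> simp [Matrix.mulVec, dotProduct, Fin.sum_univ_three]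
  · ext p; simp [Prod.ext_iff]
  · ext p; simp [Prod.ext_iff]
  · ext p; simp [Prod.ext_iff]
  · rintro ⟨φ, hφ⟩
    exact not_isPreconnectedAtInfinity_De2
      (hφ ▸ φ.isPreconnectedAtInfinity_image isPreconnectedAtInfinity_De1)
end
end
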